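/- arXiv:1601.03603 — 7 statements merged into one kernel-verified Lean document; each statement's English description precedes it below -/
import Mathlib

section
/- Let x : 𝒫 → ℝ≥0 be a flow, c̄_P ≥ 0 the bottleneck costs, B_I ≥ 0 the interdictor budget, and f a fixed positive cost value c_f > 0. Define c̄'_P := min{c̄_P / c_f, 1} and B' := B_I / c_f. Then for every interdiction strategy Δ with 0 ≤ Δ_P ≤ x_P and Σ_P c̄_P Δ_P ≤ B_I, the surviving flow satisfies Σ_P (x_P − Δ_P) ≥ Σ_P c̄'_P x_P − B'. -/
/-- With `c̄'_P = min (c̄_P / c_f) 1` and `B' = B_I / c_f`, every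
feasible interdiction strategy `Δ` leaves surviving flow at least
`∑ c̄'_P x_P − B'`.  Here `ι` is the (finite) set of paths. -/
theorem surviving_flow_lower_bound {ι : Type*} [Fintype ι]
    (x cbar : ι → ℝ) (BI cf : ℝ)
    (hx : ∀ P, 0 ≤ x P) (hcbar : ∀ P, 0 ≤ cbar P) (hBI : 0 ≤ BI) (hcf : 0 < cf)
    (Δ : ι → ℝ) (hΔ0 : ∀ P, 0 ≤ Δ P) (hΔx : ∀ P, Δ P ≤ x P)
    (hΔB : ∑ P, cbar P * Δ P ≤ BI) :
    ∑ P, (x P - Δ P) ≥ ∑ P, min (cbar P / cf) 1 * x P - BI / cf := by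
  have key : ∀ P, min (cbar P / cf) 1 * x P - cbar P / cf * Δ P ≤ x P - Δ P := by
    intro P
    rcases le_total (cbar P / cf) 1 with h | h
    · rw [min_eq_left h]
      nlinarith [hΔx P, hΔ0 P, hx P, div_nonneg (hcbar P) hcf.le]
    · rw [min_eq_right h]
      nlinarith [hΔx P, hΔ0 P, hx P]
  have h1 : ∑ P, (min (cbar P / cf) 1 * x P - cbar P / cf * Δ P) ≤ ∑ P, (x P - Δ P) :=
    Finset.sum_le_sum fun P _ => key P
  have h2 : ∑ P, cbar P / cf * Δ P ≤ BI / cf := by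
    have : ∑ P, cbar P / cf * Δ P = (∑ P, cbar P * Δ P) / cf := by
      rw [Finset.sum_div]; congr 1; ext P; ring
    rw [this]
    exact div_le_div_of_nonneg_right hΔB hcf.le
  rw [Finset.sum_sub_distrib] at h1
  linarith
end

section
/- With notation as above (c̄'_P = min{c̄_P/c_f, 1}, B' = B_I/c_f), suppose Δ is an interdiction strategy such that: (i) c̄_P ≥ c_f for every P with x_P − Δ_P > 0; (ii) c̄_P ≤ c_f for every P with Δ_P > 0; and (iii) Σ_P c̄_P Δ_P = B_I. Then the surviving flow equals the LP value: Σ_P (x_P − Δ_P) = Σ_P c̄'_P x_P − B'. -/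
/-- If the interdiction strategy `Δ` satisfies (i) `c̄_P ≥ c_f`
whenever `x_P − Δ_P > 0`, (ii) `c̄_P ≤ c_f` whenever `Δ_P > 0`, and
(iii) `∑ c̄_P Δ_P = B_I`, then the surviving flow equals the LP value
`∑ min(c̄_P/c_f, 1) x_P − B_I/c_f`. -/
theorem surviving_flow_eq_LP_value {ι : Type*} [Fintype ι]
    (x cbar : ι → ℝ) (BI cf : ℝ)
    (hx : ∀ P, 0 ≤ x P) (hcbar : ∀ P, 0 ≤ cbar P) (hBI : 0 ≤ BI) (hcf : 0 < cf)
    (Δ : ι → ℝ) (hΔ0 : ∀ P, 0 ≤ Δ P) (hΔx : ∀ P, Δ P ≤ x P)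
    (h1 : ∀ P, 0 < x P - Δ P → cf ≤ cbar P)
    (h2 : ∀ P, 0 < Δ P → cbar P ≤ cf)
    (h3 : ∑ P, cbar P * Δ P = BI) :
    ∑ P, (x P - Δ P) = ∑ P, min (cbar P / cf) 1 * x P - BI / cf := by
  rw [← h3, Finset.sum_div, ← Finset.sum_sub_distrib]
  apply Finset.sum_congr rfl
  intro P _
  rcases (hΔ0 P).lt_or_eq with hΔ | hΔ
  · have hle : cbar P ≤ cf := h2 P hΔ
    have hmin : min (cbar P / cf) 1 = cbar P / cf :=
      min_eq_left (by rw [div_le_one hcf]; exact hle)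
    rcases (sub_nonneg.mpr (hΔx P)).lt_or_eq with hxd | hxd
    · have heq : cbar P = cf := le_antisymm hle (h1 P hxd)
      rw [hmin, heq]
      field_simp
    · have hxe : x P = Δ P := by linarith
      rw [hmin, hxe]
      ring
  · rw [← hΔ]
    rcases (hx P).lt_or_eq with hxp | hxp
    · have : cf ≤ cbar P := h1 P (by simpa [← hΔ] using hxp)
      have hmin : min (cbar P / cf) 1 = 1 :=
        min_eq_right (by rw [le_div_iff₀ hcf]; linarith)
      rw [hmin]; ring
    · rw [← hxp]; ring
end

section
/- Let y : A → ℝ≥0 be nonnegative arc weights, c' : A → ℝ≥0 scaled arc costs, and 𝒫 a set of paths (arc sets). For γ ≥ 0 define y^γ_e := y_e if c'_e ≥ γ, and y^γ_e := +∞ otherwise, and let π(γ) be the minimum of Σ_{e ∈ P} y^γ_e over P ∈ 𝒫. Then there exists a path P ∈ 𝒫 with Σ_{e ∈ P} y_e < min_{e ∈ P} c'_e if and only if π(γ) < γ for some γ in the finite set Γ := {c'_e : e ∈ A}. -/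
/-!
Every arc `e` with `c'_e < γ` has `y^γ_e = +∞`, so a path has finite `y^γ`-length exactly when
all its arcs cost at least `γ`, and then that length is its `y`-length. Hence `π(γ) < γ` means
some path has bottleneck cost `≥ γ` and `y`-length `< γ`, so it violates its dual constraint.
Conversely, a violated path `P` gives `π(γ) < γ` for `γ` its own bottleneck cost `c̄'_P ∈ Γ`.
-/

open Finset

namespace DualSeparation

variable {α : Type*} (y c' : α → ℝ) (γ : ℝ) (P : Finset α)

noncomputable def modifiedLength : ENNReal :=
  ∑ e ∈ P, if γ ≤ c' e then ENNReal.ofReal (y e) else ⊤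

variable {y c' γ P}

theorem modifiedLength_lt_top_iff : modifiedLength y c' γ P < ⊤ ↔ ∀ e ∈ P, γ ≤ c' e := by
  refine ENNReal.sum_lt_top.trans (forall₂_congr fun e _ => ?_)
  split_ifs with h <;> simp [h]

theorem modifiedLength_of_forall_le (hy : ∀ e ∈ P, 0 ≤ y e) (hγ : ∀ e ∈ P, γ ≤ c' e) :
    modifiedLength y c' γ P = ENNReal.ofReal (∑ e ∈ P, y e) := by
  rw [ENNReal.ofReal_sum_of_nonneg hy]
  exact sum_congr rfl fun e he => if_pos (hγ e he)

theorem modifiedLength_lt_ofReal_iff (hy : ∀ e ∈ P, 0 ≤ y e) :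
    modifiedLength y c' γ P < ENNReal.ofReal γ ↔ (∀ e ∈ P, γ ≤ c' e) ∧ ∑ e ∈ P, y e < γ := by
  have hsum := ENNReal.ofReal_lt_ofReal_iff_of_nonneg (q := γ) (sum_nonneg hy)
  constructor
  · intro hlt
    have hγ := modifiedLength_lt_top_iff.1 (hlt.trans ENNReal.ofReal_lt_top)
    rw [modifiedLength_of_forall_le hy hγ, hsum] at hlt
    exact ⟨hγ, hlt⟩
  · rintro ⟨hγ, hlt⟩
    rwa [modifiedLength_of_forall_le hy hγ, hsum]

end DualSeparation

open DualSeparation in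
theorem dual_separation_shortest_paths_general {α : Type*}
    (Paths : Finset (Finset α)) (hne : Paths.Nonempty)
    (hnonempty : ∀ P ∈ Paths, P.Nonempty)
    (y c' : α → ℝ) (hy : ∀ e, 0 ≤ y e) :
    (∃ P ∈ Paths, ∀ f ∈ P, ∑ e ∈ P, y e < c' f) ↔
    (∃ a : α, Paths.inf' hne
        (fun P => ∑ e ∈ P,
          (if c' a ≤ c' e then ENNReal.ofReal (y e) else (⊤ : ENNReal)))
      < ENNReal.ofReal (c' a)) := by
  constructor
  · rintro ⟨P, hP, hviol⟩
    obtain ⟨a, ha, hmin⟩ := P.exists_min_image c' (hnonempty P hP)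
    exact ⟨a, (inf'_le _ hP).trans_lt
      ((modifiedLength_lt_ofReal_iff fun e _ => hy e).2 ⟨hmin, hviol a ha⟩)⟩
  · rintro ⟨a, hlt⟩
    obtain ⟨P, hP, hPlt⟩ := (inf'_lt_iff hne).1 hlt
    obtain ⟨hmin, hsum⟩ := (modifiedLength_lt_ofReal_iff fun e _ => hy e).1 hPlt
    exact ⟨P, hP, fun f hf => hsum.trans_le (hmin f hf)⟩

/-- Dual separation by shortest paths.  For nonnegative arc
weights `y` and scaled costs `c'` on a finite arc set `A`, define for `γ ≥ 0`
the modified weights `y^γ_e = y_e` if `c'_e ≥ γ` and `+∞` otherwise, and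
`π(γ)` the minimum modified length over the path family `𝒫` (each path a
nonempty arc set).  Then some path violates its dual constraint
`∑_{e∈P} y_e ≥ min_{e∈P} c'_e` iff `π(γ) < γ` for some `γ ∈ {c'_e : e ∈ A}`. -/
theorem dual_separation_shortest_paths {α : Type*} [Fintype α] [DecidableEq α]
    (Paths : Finset (Finset α)) (hne : Paths.Nonempty)
    (hnonempty : ∀ P ∈ Paths, P.Nonempty)
    (y c' : α → ℝ) (hy : ∀ e, 0 ≤ y e) (hc' : ∀ e, 0 ≤ c' e) :
    (∃ P ∈ Paths, ∀ f ∈ P, ∑ e ∈ P, y e < c' f) ↔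
    (∃ a : α, Paths.inf' hne
        (fun P => ∑ e ∈ P,
          (if c' a ≤ c' e then ENNReal.ofReal (y e) else (⊤ : ENNReal)))
      < ENNReal.ofReal (c' a)) :=
  dual_separation_shortest_paths_general Paths hne hnonempty y c' hy
end

section
/- In the multicommodity reduction instance I', if the original MF instance I admits a feasible multicommodity flow satisfying all demands d_i, then the flow player can achieve a robust profit of exactly 1: sending d_i units on paths through arcs a_i, z_i (each with bottleneck cost i) plus 1 unit on the direct arc e* (with cost k+1), the interdictor's budget B_I = Σ_i d_i · i suffices to steal exactly all flow except the unit on e*. -/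
/-- Feasible MF ⟹ robust profit exactly 1 in the instance `I'`.
Abstract formulation: the `s`-`t`-paths of `I'` are a finite type `ι` with a
distinguished direct path `Pstar` (the path along `e*`, with bottleneck cost
`k+1` and carrying one unit of flow).  Every other flow-carrying path belongs
to a commodity `cls P ∈ {1,…,k}` (it starts with `a_i` and ends with `z_i`)
and has bottleneck cost `cls P`, and the flow of commodity `i` totals `d i`.
Then, against interdiction budget `B_I = ∑_i d_i · i`, the least possible
surviving flow is exactly `1`: the interdictor can steal exactly all the flow
except the unit on `e*`. -/
theorem MF_feasible_implies_robust_profit_one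
    {ι : Type*} [Fintype ι] [DecidableEq ι] (k : ℕ)
    (Pstar : ι) (cls : ι → Fin k)
    (cbar x : ι → ℝ) (d : Fin k → ℝ)
    (hd : ∀ i, 0 ≤ d i) (hcb : ∀ P, 0 ≤ cbar P)
    (hstar : cbar Pstar = (k : ℝ) + 1) (hxstar : x Pstar = 1)
    (hx : ∀ P, 0 ≤ x P)
    (hcost : ∀ P, P ≠ Pstar → 0 < x P → cbar P = (cls P : ℕ) + 1)
    (hdem : ∀ i, ∑ P ∈ Finset.univ.filter (fun P => P ≠ Pstar ∧ cls P = i),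
        x P = d i) :
    IsLeast {s : ℝ | ∃ Δ : ι → ℝ, (∀ P, 0 ≤ Δ P ∧ Δ P ≤ x P) ∧
        (∑ P, cbar P * Δ P ≤ ∑ i, d i * ((i : ℕ) + 1)) ∧
        s = ∑ P, (x P - Δ P)} 1 := by
  classical
  set fib : Fin k → Finset ι :=
    fun i => Finset.univ.filter (fun P => P ≠ Pstar ∧ cls P = i) with hfib
  -- splitting any sum over `ι` into the `Pstar` term plus the fibers
  have hsplit : ∀ f : ι → ℝ, ∑ P, f P = f Pstar + ∑ i, ∑ P ∈ fib i, f P := by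
    intro f
    have h1 : ∑ P, f P = f Pstar + ∑ P ∈ Finset.univ.erase Pstar, f P :=
      (Finset.add_sum_erase _ f (Finset.mem_univ _)).symm
    have h2 : ∑ P ∈ Finset.univ.erase Pstar, f P = ∑ i, ∑ P ∈ fib i, f P := by
      rw [← Finset.filter_ne']
      rw [← Finset.sum_fiberwise_of_maps_to
        (g := cls) (t := Finset.univ) (fun y _ => Finset.mem_univ (cls y)) f]
      refine Finset.sum_congr rfl fun i _ => ?_
      rw [Finset.filter_filter]
    rw [h1, h2]
  -- cost of interdiction on each fiber
  have hfibcost : ∀ (Δ : ι → ℝ), (∀ P, 0 ≤ Δ P ∧ Δ P ≤ x P) → ∀ i,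
      ∑ P ∈ fib i, cbar P * Δ P = ((i.1 : ℝ) + 1) * ∑ P ∈ fib i, Δ P := by
    intro Δ hΔ i
    rw [Finset.mul_sum]
    refine Finset.sum_congr rfl fun P hP => ?_
    simp only [hfib, Finset.mem_filter] at hP
    rcases (hx P).lt_or_eq with hxp | hxp
    · rw [hcost P hP.2.1 hxp, hP.2.2]
    · have h0 : Δ P = 0 := le_antisymm (hxp ▸ (hΔ P).2) (hΔ P).1
      rw [h0, mul_zero, mul_zero]
  constructor
  · -- 1 is achievable: steal everything except the unit on `e*`
    refine ⟨fun P => if P = Pstar then 0 else x P, fun P => ?_, ?_, ?_⟩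
    · by_cases h : P = Pstar <;> simp [h, hx]
    · have hΔ : ∀ P, (0:ℝ) ≤ (if P = Pstar then 0 else x P) ∧
          (if P = Pstar then (0:ℝ) else x P) ≤ x P := by
        intro P; by_cases h : P = Pstar <;> simp [h, hx]
      rw [hsplit (fun P => cbar P * if P = Pstar then 0 else x P)]
      simp only [if_pos rfl, if_true, mul_zero, zero_add]
      have : ∀ i, ∑ P ∈ fib i, cbar P * (if P = Pstar then 0 else x P)
          = ((i.1 : ℝ) + 1) * d i := by
        intro i
        rw [hfibcost _ hΔ i]
        congr 1
        rw [← hdem i]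
        refine Finset.sum_congr rfl fun P hP => ?_
        simp only [hfib, Finset.mem_filter] at hP
        simp [hP.2.1]
      rw [Finset.sum_congr rfl fun i _ => this i]
      refine le_of_eq (Finset.sum_congr rfl fun i _ => (mul_comm _ _))
    · rw [hsplit (fun P => x P - if P = Pstar then 0 else x P)]
      simp only [if_pos rfl, if_true, sub_zero, hxstar]
      have : ∀ i, ∑ P ∈ fib i, (x P - if P = Pstar then 0 else x P) = 0 := by
        intro i
        refine Finset.sum_eq_zero fun P hP => ?_
        simp only [hfib, Finset.mem_filter] at hP
        simp [hP.2.1]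
      rw [Finset.sum_congr rfl fun i _ => this i]
      simp
  · -- lower bound: no interdiction within budget leaves less than 1
    rintro s ⟨Δ, hΔ, hbud, rfl⟩
    set S : Fin k → ℝ := fun i => ∑ P ∈ fib i, Δ P with hS
    have hSle : ∀ i, S i ≤ d i := by
      intro i
      rw [hS, ← hdem i]
      exact Finset.sum_le_sum fun P _ => (hΔ P).2
    have hbud' : ((k : ℝ) + 1) * Δ Pstar + ∑ i, ((i.1 : ℝ) + 1) * S i
        ≤ ∑ i, d i * ((i.1 : ℝ) + 1) := by
      calc ((k : ℝ) + 1) * Δ Pstar + ∑ i, ((i.1 : ℝ) + 1) * S i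
          = ∑ P, cbar P * Δ P := by
            rw [hsplit (fun P => cbar P * Δ P), hstar]
            congr 1
            exact (Finset.sum_congr rfl fun i _ => hfibcost Δ hΔ i).symm
        _ ≤ ∑ i, d i * ((i.1 : ℝ) + 1) := hbud
    have hstarle : Δ Pstar ≤ ∑ i, (d i - S i) := by
      have h1 : ((k : ℝ) + 1) * Δ Pstar
          ≤ ∑ i, ((i.1 : ℝ) + 1) * (d i - S i) := by
        have : ∑ i, ((i.1 : ℝ) + 1) * (d i - S i)
            = ∑ i, d i * ((i.1 : ℝ) + 1) - ∑ i, ((i.1 : ℝ) + 1) * S i := by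
          rw [← Finset.sum_sub_distrib]
          refine Finset.sum_congr rfl fun i _ => by ring
        linarith [hbud', this]
      have h2 : ∑ i, ((i.1 : ℝ) + 1) * (d i - S i)
          ≤ ∑ i, ((k : ℝ) + 1) * (d i - S i) := by
        refine Finset.sum_le_sum fun i _ => ?_
        have hik : ((i : ℕ) : ℝ) ≤ (k : ℝ) := by
          exact_mod_cast (i.is_lt).le
        have := sub_nonneg.mpr (hSle i)
        nlinarith
      have h3 : ((k : ℝ) + 1) * Δ Pstar ≤ ((k : ℝ) + 1) * ∑ i, (d i - S i) := by
        rw [Finset.mul_sum]; linarith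
      have hk : (0:ℝ) < (k : ℝ) + 1 := by positivity
      exact le_of_mul_le_mul_left h3 hk
    rw [hsplit (fun P => x P - Δ P)]
    have hfibsum : ∀ i, ∑ P ∈ fib i, (x P - Δ P) = d i - S i := by
      intro i
      rw [Finset.sum_sub_distrib, hdem i, hS]
    rw [Finset.sum_congr rfl fun i _ => hfibsum i, hxstar]
    linarith
end

section
/- In the multicommodity reduction instance I', if the flow player achieves a robust profit of 1 with flow x, then for every commodity i, the flow on paths starting with arc a_i totals exactly d_i and every flow-carrying path starting with a_i ends with z_i; hence x restricted to the original network is a feasible multicommodity flow satisfying all demands. -/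
/-- Robust profit 1 ⟹ feasible MF.  Abstract formulation of the
instance `I'`: paths form a finite type `ι` with the distinguished direct path
`Pstar` (capacity 1, bottleneck cost `k+1`); every other path `P` starts with
arc `a_{σ P}` and ends with arc `z_{τ P}`, so its bottleneck cost is
`min (σ P, τ P)` (commodities numbered `1,…,k` via `Fin k`, cost of commodity
`i` being `i`); capacities force at most `d i` flow through `a_i` and through
`z_i`.  If every interdiction with budget `B_I = ∑_i d_i · i` leaves surviving
flow at least 1, then for each commodity `i` the flow starting with `a_i`
totals exactly `d i`, and every flow-carrying path starting with `a_i` also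
ends with `z_i` — i.e. `x` restricts to a feasible multicommodity flow. -/
theorem robust_profit_one_implies_MF_feasible
    {ι : Type*} [Fintype ι] [DecidableEq ι] (k : ℕ)
    (Pstar : ι) (σ τ : ι → Fin k)
    (cbar x : ι → ℝ) (d : Fin k → ℝ)
    (hd : ∀ i, 0 ≤ d i) (hx : ∀ P, 0 ≤ x P) (hxstar : x Pstar ≤ 1)
    (hstar : cbar Pstar = (k : ℝ) + 1)
    (hcost : ∀ P, P ≠ Pstar →
      cbar P = min (((σ P : ℕ) : ℝ) + 1) (((τ P : ℕ) : ℝ) + 1))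
    (hcapσ : ∀ i, ∑ P ∈ Finset.univ.filter (fun P => P ≠ Pstar ∧ σ P = i),
        x P ≤ d i)
    (hcapτ : ∀ i, ∑ P ∈ Finset.univ.filter (fun P => P ≠ Pstar ∧ τ P = i),
        x P ≤ d i)
    (hprofit : ∀ Δ : ι → ℝ, (∀ P, 0 ≤ Δ P ∧ Δ P ≤ x P) →
      (∑ P, cbar P * Δ P ≤ ∑ i, d i * ((i : ℕ) + 1)) →
      1 ≤ ∑ P, (x P - Δ P)) :
    (∀ i, ∑ P ∈ Finset.univ.filter (fun P => P ≠ Pstar ∧ σ P = i), x P = d i) ∧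
    (∀ P, P ≠ Pstar → 0 < x P → τ P = σ P) := by
  classical
  set B : ℝ := ∑ i, d i * ((i : ℕ) + 1) with hB
  set C : ℝ := ∑ P ∈ Finset.univ.erase Pstar, cbar P * x P with hC
  -- fiberwise decomposition of C w.r.t. any map g : ι → Fin k
  have hfib : ∀ g : ι → Fin k,
      C = ∑ i, ∑ P ∈ Finset.univ.filter (fun P => P ≠ Pstar ∧ g P = i),
        cbar P * x P := by
    intro g
    rw [hC, ← Finset.sum_fiberwise_of_maps_to
      (t := (Finset.univ : Finset (Fin k))) (g := g)
      (fun P _ => Finset.mem_univ (g P)) (fun P => cbar P * x P)]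
    refine Finset.sum_congr rfl fun i _ => ?_
    refine Finset.sum_congr ?_ fun _ _ => rfl
    rw [← Finset.filter_ne' Finset.univ Pstar, Finset.filter_filter]
  -- pointwise bound on fibers: cbar P ≤ i+1 for P in the σ-fiber of i
  have hptσ : ∀ i, ∀ P ∈ Finset.univ.filter (fun P => P ≠ Pstar ∧ σ P = i),
      cbar P * x P ≤ (((i : ℕ) : ℝ) + 1) * x P := by
    intro i P hP
    simp only [Finset.mem_filter] at hP
    obtain ⟨-, hne, hσ⟩ := hP
    rw [hcost P hne, ← hσ]
    exact mul_le_mul_of_nonneg_right (min_le_left _ _) (hx P)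
  have hptτ : ∀ i, ∀ P ∈ Finset.univ.filter (fun P => P ≠ Pstar ∧ τ P = i),
      cbar P * x P ≤ (((i : ℕ) : ℝ) + 1) * x P := by
    intro i P hP
    simp only [Finset.mem_filter] at hP
    obtain ⟨-, hne, hτ⟩ := hP
    rw [hcost P hne, ← hτ]
    exact mul_le_mul_of_nonneg_right (min_le_right _ _) (hx P)
  -- fiber cost bound
  have hfbdσ : ∀ i, ∑ P ∈ Finset.univ.filter (fun P => P ≠ Pstar ∧ σ P = i),
      cbar P * x P ≤ d i * (((i : ℕ) : ℝ) + 1) := by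
    intro i
    calc ∑ P ∈ Finset.univ.filter (fun P => P ≠ Pstar ∧ σ P = i), cbar P * x P
        ≤ ∑ P ∈ Finset.univ.filter (fun P => P ≠ Pstar ∧ σ P = i),
            (((i : ℕ) : ℝ) + 1) * x P := Finset.sum_le_sum (hptσ i)
      _ = (((i : ℕ) : ℝ) + 1) *
            ∑ P ∈ Finset.univ.filter (fun P => P ≠ Pstar ∧ σ P = i), x P := by
            rw [Finset.mul_sum]
      _ ≤ (((i : ℕ) : ℝ) + 1) * d i :=
            mul_le_mul_of_nonneg_left (hcapσ i) (by positivity)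
      _ = d i * (((i : ℕ) : ℝ) + 1) := mul_comm _ _
  have hfbdτ : ∀ i, ∑ P ∈ Finset.univ.filter (fun P => P ≠ Pstar ∧ τ P = i),
      cbar P * x P ≤ d i * (((i : ℕ) : ℝ) + 1) := by
    intro i
    calc ∑ P ∈ Finset.univ.filter (fun P => P ≠ Pstar ∧ τ P = i), cbar P * x P
        ≤ ∑ P ∈ Finset.univ.filter (fun P => P ≠ Pstar ∧ τ P = i),
            (((i : ℕ) : ℝ) + 1) * x P := Finset.sum_le_sum (hptτ i)
      _ = (((i : ℕ) : ℝ) + 1) *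
            ∑ P ∈ Finset.univ.filter (fun P => P ≠ Pstar ∧ τ P = i), x P := by
            rw [Finset.mul_sum]
      _ ≤ (((i : ℕ) : ℝ) + 1) * d i :=
            mul_le_mul_of_nonneg_left (hcapτ i) (by positivity)
      _ = d i * (((i : ℕ) : ℝ) + 1) := mul_comm _ _
  have hCB : C ≤ B := by
    rw [hfib σ, hB]
    exact Finset.sum_le_sum fun i _ => hfbdσ i
  -- first interdiction: kill everything except Pstar
  have hxstar1 : x Pstar = 1 := by
    have h := hprofit (fun P => if P = Pstar then 0 else x P)
      (fun P => by by_cases h : P = Pstar <;> simp [h, hx P, hx Pstar]) ?_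
    · have : ∑ P, (x P - if P = Pstar then 0 else x P) = x Pstar := by
        rw [Finset.sum_congr rfl (fun P _ => show
          (x P - if P = Pstar then 0 else x P) = if P = Pstar then x P else 0 by
          by_cases h : P = Pstar <;> simp [h])]
        simp
      linarith [this ▸ h]
    · have : ∑ P, cbar P * (if P = Pstar then 0 else x P) = C := by
        rw [hC, ← Finset.add_sum_erase _ _ (Finset.mem_univ Pstar)]
        rw [if_pos rfl, mul_zero, zero_add]
        refine Finset.sum_congr rfl fun P hP => ?_
        rw [if_neg (Finset.ne_of_mem_erase hP)]
      rw [this]; exact hCB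
  -- C = B
  have hCeqB : C = B := by
    by_contra hne
    have hlt : C < B := lt_of_le_of_ne hCB hne
    set δ : ℝ := min ((B - C) / ((k : ℝ) + 1)) 1 with hδ
    have hk1 : (0 : ℝ) < (k : ℝ) + 1 := by positivity
    have hδ0 : 0 < δ := lt_min (div_pos (by linarith) hk1) one_pos
    have hδ1 : δ ≤ 1 := min_le_right _ _
    have h := hprofit (fun P => if P = Pstar then δ else x P)
      (fun P => by
        by_cases h : P = Pstar
        · simp [h, hxstar1, hδ0.le, hδ1]
        · simp [h, hx P]) ?_
    · have : ∑ P, (x P - if P = Pstar then δ else x P) = 1 - δ := by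
        rw [← Finset.add_sum_erase _ _ (Finset.mem_univ Pstar)]
        rw [if_pos rfl]
        rw [Finset.sum_congr rfl (fun P hP => show
          (x P - if P = Pstar then δ else x P) = 0 by
          rw [if_neg (Finset.ne_of_mem_erase hP)]; ring), Finset.sum_const_zero,
          hxstar1]
        ring
      rw [this] at h; linarith
    · have hsum : ∑ P, cbar P * (if P = Pstar then δ else x P)
          = ((k : ℝ) + 1) * δ + C := by
        rw [hC, ← Finset.add_sum_erase _ _ (Finset.mem_univ Pstar)]
        rw [if_pos rfl, hstar]
        congr 1
        refine Finset.sum_congr rfl fun P hP => ?_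
        rw [if_neg (Finset.ne_of_mem_erase hP)]
      rw [hsum]
      have : ((k : ℝ) + 1) * δ ≤ B - C := by
        have := min_le_left ((B - C) / ((k : ℝ) + 1)) 1
        calc ((k : ℝ) + 1) * δ ≤ ((k : ℝ) + 1) * ((B - C) / ((k : ℝ) + 1)) :=
              mul_le_mul_of_nonneg_left this hk1.le
          _ = B - C := by field_simp
      linarith
  -- equality forces fiber equalities
  have hfeqσ : ∀ i, ∑ P ∈ Finset.univ.filter (fun P => P ≠ Pstar ∧ σ P = i),
      cbar P * x P = d i * (((i : ℕ) : ℝ) + 1) := by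
    have := (Finset.sum_eq_sum_iff_of_le (fun i _ => hfbdσ i)).mp
      (by rw [← hfib σ, hCeqB, hB])
    exact fun i => this i (Finset.mem_univ i)
  have hfeqτ : ∀ i, ∑ P ∈ Finset.univ.filter (fun P => P ≠ Pstar ∧ τ P = i),
      cbar P * x P = d i * (((i : ℕ) : ℝ) + 1) := by
    have := (Finset.sum_eq_sum_iff_of_le (fun i _ => hfbdτ i)).mp
      (by rw [← hfib τ, hCeqB, hB])
    exact fun i => this i (Finset.mem_univ i)
  -- pointwise equality on fibers
  have hpeσ : ∀ i, ∀ P ∈ Finset.univ.filter (fun P => P ≠ Pstar ∧ σ P = i),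
      cbar P * x P = (((i : ℕ) : ℝ) + 1) * x P := by
    intro i
    refine (Finset.sum_eq_sum_iff_of_le (hptσ i)).mp ?_
    have h1 := hfeqσ i
    have h2 : (((i : ℕ) : ℝ) + 1) *
        ∑ P ∈ Finset.univ.filter (fun P => P ≠ Pstar ∧ σ P = i), x P
        ≤ d i * (((i : ℕ) : ℝ) + 1) := by
      rw [mul_comm (d i)]
      exact mul_le_mul_of_nonneg_left (hcapσ i) (by positivity)
    have h3 : ∑ P ∈ Finset.univ.filter (fun P => P ≠ Pstar ∧ σ P = i),
        (((i : ℕ) : ℝ) + 1) * x P = (((i : ℕ) : ℝ) + 1) *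
        ∑ P ∈ Finset.univ.filter (fun P => P ≠ Pstar ∧ σ P = i), x P :=
      (Finset.mul_sum _ _ _).symm
    linarith [Finset.sum_le_sum (hptσ i)]
  have hpeτ : ∀ i, ∀ P ∈ Finset.univ.filter (fun P => P ≠ Pstar ∧ τ P = i),
      cbar P * x P = (((i : ℕ) : ℝ) + 1) * x P := by
    intro i
    refine (Finset.sum_eq_sum_iff_of_le (hptτ i)).mp ?_
    have h1 := hfeqτ i
    have h2 : (((i : ℕ) : ℝ) + 1) *
        ∑ P ∈ Finset.univ.filter (fun P => P ≠ Pstar ∧ τ P = i), x P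
        ≤ d i * (((i : ℕ) : ℝ) + 1) := by
      rw [mul_comm (d i)]
      exact mul_le_mul_of_nonneg_left (hcapτ i) (by positivity)
    have h3 : ∑ P ∈ Finset.univ.filter (fun P => P ≠ Pstar ∧ τ P = i),
        (((i : ℕ) : ℝ) + 1) * x P = (((i : ℕ) : ℝ) + 1) *
        ∑ P ∈ Finset.univ.filter (fun P => P ≠ Pstar ∧ τ P = i), x P :=
      (Finset.mul_sum _ _ _).symm
    linarith [Finset.sum_le_sum (hptτ i)]
  constructor
  · -- S i = d i
    intro i
    have h1 := hfeqσ i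
    have h2 : ∑ P ∈ Finset.univ.filter (fun P => P ≠ Pstar ∧ σ P = i),
        cbar P * x P = (((i : ℕ) : ℝ) + 1) *
        ∑ P ∈ Finset.univ.filter (fun P => P ≠ Pstar ∧ σ P = i), x P := by
      rw [Finset.mul_sum]
      exact Finset.sum_congr rfl (hpeσ i)
    have hk1 : (0 : ℝ) < ((i : ℕ) : ℝ) + 1 := by positivity
    have h4 : (((i : ℕ) : ℝ) + 1) *
        ∑ P ∈ Finset.univ.filter (fun P => P ≠ Pstar ∧ σ P = i), x P
        = (((i : ℕ) : ℝ) + 1) * d i := by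
      rw [← h2, h1, mul_comm]
    exact mul_left_cancel₀ (ne_of_gt hk1) h4
  · -- τ P = σ P for flow-carrying P
    intro P hne hxP
    have hmσ : P ∈ Finset.univ.filter (fun Q => Q ≠ Pstar ∧ σ Q = σ P) := by
      simp [hne]
    have hmτ : P ∈ Finset.univ.filter (fun Q => Q ≠ Pstar ∧ τ Q = τ P) := by
      simp [hne]
    have e1 := hpeσ (σ P) P hmσ
    have e2 := hpeτ (τ P) P hmτ
    have hc1 : cbar P = ((σ P : ℕ) : ℝ) + 1 :=
      mul_right_cancel₀ (ne_of_gt hxP) e1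
    have hc2 : cbar P = ((τ P : ℕ) : ℝ) + 1 :=
      mul_right_cancel₀ (ne_of_gt hxP) e2
    have : ((σ P : ℕ) : ℝ) = ((τ P : ℕ) : ℝ) := by linarith [hc1 ▸ hc2]
    exact (Fin.ext (Nat.cast_injective this)).symm
end

section
/- In the hardness-reduction instance, suppose every s₁-t₁-path P₁ in D shares at least one arc with every s₂-t₂-path used by the flow. If the total flow Y on paths through a₂ or z₂ satisfies Y > 0, then the bottleneck cost of any path a₁∘P₁∘z₁ is at most min{|A|(M−1)/Y + 1, M}, because the total protection spent on the ≥1 shared arcs of P₁, which each carry at least Y units of the cheap flow, is bounded by the budget B_F = |A|(M−1). -/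
/-- Bottleneck-cost bound in the hardness instance.  `P₁` is the
arc set of an `s₁`-`t₁`-path; the flow player raises the cost of arc `e` from
`1` to `1 + c⁺_e`.  Every cheap path `q` (indexed by the finite type `Q`,
carrying flow `xQ q ≥ 0`, total `Y = ∑ xQ > 0`) shares the arc `hit q ∈ P₁`
with `P₁`, and the total protection expense
`∑_{e∈P₁} c⁺_e · (cheap flow through e)` is at most `B_F = n(M−1)`.  Then the
bottleneck cost of the expensive path `a₁∘P₁∘z₁` (capped at `M` by the fixed
costs of `a₁, z₁`) is at most `min (n(M−1)/Y + 1) M`. -/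
theorem bottleneck_cost_bound {α : Type*} [DecidableEq α] {Q : Type*} [Fintype Q]
    (P₁ : Finset α) (hP₁ : P₁.Nonempty)
    (cplus : α → ℝ) (hc : ∀ e, 0 ≤ cplus e)
    (xQ : Q → ℝ) (hxQ : ∀ q, 0 ≤ xQ q)
    (hit : Q → α) (hhit : ∀ q, hit q ∈ P₁)
    (Y : ℝ) (hY : Y = ∑ q, xQ q) (hYpos : 0 < Y)
    (n : ℕ) (M : ℝ) (hM : M = (n : ℝ) + 3)
    (hbudget : ∑ e ∈ P₁,
        cplus e * (∑ q ∈ Finset.univ.filter (fun q => hit q = e), xQ q) ≤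
      (n : ℝ) * (M - 1)) :
    min (P₁.inf' hP₁ (fun e => 1 + cplus e)) M ≤
      min ((n : ℝ) * (M - 1) / Y + 1) M := by
  apply le_min _ (min_le_right _ _)
  -- it suffices to bound the inf' term
  refine le_trans (min_le_left _ _) ?_
  obtain ⟨e₀, he₀, he₀eq⟩ := P₁.exists_mem_eq_inf' hP₁ cplus
  have h1 : P₁.inf' hP₁ (fun e => 1 + cplus e) ≤ 1 + cplus e₀ :=
    Finset.inf'_le _ he₀
  have hfib : ∑ e ∈ P₁, (∑ q ∈ Finset.univ.filter (fun q => hit q = e), xQ q) = Y := by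
    rw [hY]
    exact Finset.sum_fiberwise_of_maps_to (fun q _ => hhit q) xQ
  have hlow : cplus e₀ * Y ≤ (n : ℝ) * (M - 1) := by
    calc cplus e₀ * Y
        = ∑ e ∈ P₁, cplus e₀ * (∑ q ∈ Finset.univ.filter (fun q => hit q = e), xQ q) := by
          rw [← Finset.mul_sum, hfib]
      _ ≤ ∑ e ∈ P₁, cplus e * (∑ q ∈ Finset.univ.filter (fun q => hit q = e), xQ q) := by
          apply Finset.sum_le_sum
          intro e he
          have : cplus e₀ ≤ cplus e := he₀eq ▸ Finset.inf'_le _ he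
          exact mul_le_mul_of_nonneg_right this
            (Finset.sum_nonneg fun q _ => hxQ q)
      _ ≤ (n : ℝ) * (M - 1) := hbudget
  have : cplus e₀ ≤ (n : ℝ) * (M - 1) / Y := by
    rw [le_div_iff₀ hYpos]; exact hlow
  linarith
end

section
/- Consider the budgeted variant of the robust flow LP: maximize Σ_P c̄'_P x_P − B' subject to Σ_{P ∋ e} x_P ≤ u_e for all e, Σ_P γ_P x_P ≤ B_F with γ_P := Σ_{e ∈ P} γ_e, and x ≥ 0. Its dual separation problem asks, given arc weights y : A → ℝ≥0 and a scalar μ ≥ 0 (multiplier of the budget constraint), whether some path P violates Σ_{e ∈ P} (y_e + μ γ_e) ≥ c̄'_P; this reduces, exactly as in the unbudgeted case, to |Γ| shortest-path computations with modified weights (y_e + μγ_e restricted to arcs with c'_e ≥ γ, and +∞ otherwise): a violated constraint exists iff π(γ) < γ for some γ ∈ Γ := {c'_e : e ∈ A}. -/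
/-!
A path `P` violates its dual constraint iff its weight is below `c'` at the cheapest arc of `P`,
i.e. below `γ₀ = c'_a` for an arc `a` of `P` with `c'_a` minimal. The modified weights for this
`γ₀` are finite exactly on paths all of whose arcs cost at least `γ₀`, and on such a path they
sum to its true weight; so `P` is violated iff its modified length is below `γ₀ = c'_a` for some
arc `a`, and minimising over the path family gives `π(γ₀) < γ₀`.
-/

open scoped ENNReal

section ModifiedWeight

variable {α : Type*}

noncomputable def modifiedWeight (w c : α → ℝ) (γ₀ : ℝ) (e : α) : ℝ≥0∞ :=
  if γ₀ ≤ c e then ENNReal.ofReal (w e) else ⊤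

variable {w c : α → ℝ} {γ₀ : ℝ} {P : Finset α}

theorem sum_modifiedWeight_lt_top_iff :
    ∑ e ∈ P, modifiedWeight w c γ₀ e < ⊤ ↔ ∀ e ∈ P, γ₀ ≤ c e := by
  refine ENNReal.sum_lt_top.trans (forall₂_congr fun e _ => ?_)
  by_cases h : γ₀ ≤ c e <;> simp [modifiedWeight, h]

theorem sum_modifiedWeight_eq_ofReal (hw : ∀ e ∈ P, 0 ≤ w e) (hc : ∀ e ∈ P, γ₀ ≤ c e) :
    ∑ e ∈ P, modifiedWeight w c γ₀ e = ENNReal.ofReal (∑ e ∈ P, w e) := by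
  rw [ENNReal.ofReal_sum_of_nonneg hw]
  exact Finset.sum_congr rfl fun e he => if_pos (hc e he)

theorem sum_modifiedWeight_lt_ofReal_iff (hw : ∀ e ∈ P, 0 ≤ w e) :
    ∑ e ∈ P, modifiedWeight w c γ₀ e < ENNReal.ofReal γ₀ ↔
      (∀ e ∈ P, γ₀ ≤ c e) ∧ ∑ e ∈ P, w e < γ₀ := by
  constructor
  · intro h
    have hc := sum_modifiedWeight_lt_top_iff.1 (h.trans ENNReal.ofReal_lt_top)
    rw [sum_modifiedWeight_eq_ofReal hw hc,
      ENNReal.ofReal_lt_ofReal_iff_of_nonneg (Finset.sum_nonneg hw)] at h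
    exact ⟨hc, h⟩
  · rintro ⟨hc, hlt⟩
    rwa [sum_modifiedWeight_eq_ofReal hw hc,
      ENNReal.ofReal_lt_ofReal_iff_of_nonneg (Finset.sum_nonneg hw)]

theorem forall_sum_lt_iff_exists_sum_modifiedWeight_lt (hP : P.Nonempty)
    (hw : ∀ e ∈ P, 0 ≤ w e) :
    (∀ f ∈ P, ∑ e ∈ P, w e < c f) ↔
      ∃ a, ∑ e ∈ P, modifiedWeight w c (c a) e < ENNReal.ofReal (c a) := by
  simp only [sum_modifiedWeight_lt_ofReal_iff hw]
  constructor
  · intro hlt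
    obtain ⟨a, ha, hmin⟩ := Finset.exists_min_image P c hP
    exact ⟨a, hmin, hlt a ha⟩
  · rintro ⟨a, hmin, hlt⟩ f hf
    exact hlt.trans_le (hmin f hf)

end ModifiedWeight

theorem budgeted_dual_separation_general {α : Type*}
    (Paths : Finset (Finset α)) (hne : Paths.Nonempty)
    (hnonempty : ∀ P ∈ Paths, P.Nonempty)
    (y γ c' : α → ℝ) (hy : ∀ e, 0 ≤ y e) (hγ : ∀ e, 0 ≤ γ e)
    (μ : ℝ) (hμ : 0 ≤ μ) :
    (∃ P ∈ Paths, ∀ f ∈ P, ∑ e ∈ P, (y e + μ * γ e) < c' f) ↔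
    (∃ a : α, Paths.inf' hne
        (fun P => ∑ e ∈ P,
          (if c' a ≤ c' e then ENNReal.ofReal (y e + μ * γ e)
           else (⊤ : ENNReal)))
      < ENNReal.ofReal (c' a)) := by
  have hw : ∀ e, 0 ≤ y e + μ * γ e := fun e => add_nonneg (hy e) (mul_nonneg hμ (hγ e))
  calc (∃ P ∈ Paths, ∀ f ∈ P, ∑ e ∈ P, (y e + μ * γ e) < c' f)
      ↔ ∃ P ∈ Paths, ∃ a, ∑ e ∈ P, modifiedWeight (fun e => y e + μ * γ e) c' (c' a) e
          < ENNReal.ofReal (c' a) :=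
        exists_congr fun P => and_congr_right fun hP =>
          forall_sum_lt_iff_exists_sum_modifiedWeight_lt (hnonempty P hP) fun e _ => hw e
    _ ↔ _ := by
        simp only [Finset.inf'_lt_iff]
        exact ⟨fun ⟨P, hP, a, h⟩ => ⟨a, P, hP, h⟩, fun ⟨a, P, hP, h⟩ => ⟨P, hP, a, h⟩⟩

/-- Dual separation for the budgeted robust flow LP.  Dual
variables are arc weights `y ≥ 0` and a budget multiplier `μ ≥ 0`; the dual
constraint of path `P` is `∑_{e∈P} (y_e + μ γ_e) ≥ min_{e∈P} c'_e`.  With the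
modified weights `w^γ₀_e = y_e + μ γ_e` if `c'_e ≥ γ₀` and `+∞` otherwise, and
`π(γ₀)` the minimum modified length over the path family, a violated dual
constraint exists iff `π(γ₀) < γ₀` for some `γ₀ ∈ Γ = {c'_e : e ∈ A}`. -/
theorem budgeted_dual_separation {α : Type*} [Fintype α] [DecidableEq α]
    (Paths : Finset (Finset α)) (hne : Paths.Nonempty)
    (hnonempty : ∀ P ∈ Paths, P.Nonempty)
    (y γ c' : α → ℝ) (hy : ∀ e, 0 ≤ y e) (hγ : ∀ e, 0 ≤ γ e)
    (hc' : ∀ e, 0 ≤ c' e) (μ : ℝ) (hμ : 0 ≤ μ) :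
    (∃ P ∈ Paths, ∀ f ∈ P, ∑ e ∈ P, (y e + μ * γ e) < c' f) ↔
    (∃ a : α, Paths.inf' hne
        (fun P => ∑ e ∈ P,
          (if c' a ≤ c' e then ENNReal.ofReal (y e + μ * γ e)
           else (⊤ : ENNReal)))
      < ENNReal.ofReal (c' a)) :=
  budgeted_dual_separation_general Paths hne hnonempty y γ c' hy hγ μ hμ
end
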